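/- arXiv:2507.19010 — 2 statements merged into one kernel-verified Lean document; each statement's English description precedes it below -/
import Mathlib

section
/- For all integers x, y, z and every natural number k, 2^k · (x XOR y XOR z) + 2^(k+1) · ((x AND y) OR (x AND z) OR (y AND z)) = 2^k · (x + y + z). -/
instance : XorOp ℤ := ⟨Int.xor⟩
instance : AndOp ℤ := ⟨Int.land⟩
instance : OrOp ℤ := ⟨Int.lor⟩

/-!
Appending low bits `a, b, c` to `x, y, z` (i.e. passing to `2x + a`, …) appends the bits
`a ⊕ b ⊕ c` and `maj a b c` to the xor and majority, and the full-adder identity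
`(a ⊕ b ⊕ c) + 2 maj(a, b, c) = a + b + c` shows that the Add-3 identity survives this step.
Halving drives every integer with `-2^n ≤ x < 2^n` to one of the fixed points `0, -1` of `x ↦ x / 2`
in `n` steps, and on `{0, -1}` the identity is a finite check.
-/

namespace Int

def maj (x y z : ℤ) : ℤ := (x &&& y) ||| (x &&& z) ||| (y &&& z)

lemma xor_xor_add_two_mul_maj_bit {x y z : ℤ}
    (h : (x ^^^ y ^^^ z) + 2 * maj x y z = x + y + z) (a b c : Bool) :
    (bit a x ^^^ bit b y ^^^ bit c z) + 2 * maj (bit a x) (bit b y) (bit c z)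
      = bit a x + bit b y + bit c z := by
  change (x.xor y).xor z + 2 * ((x.land y).lor (x.land z)).lor (y.land z) = _ at h
  change (Int.xor _ _).xor _ + 2 * ((land _ _).lor (land _ _)).lor (land _ _) = _
  rw [lxor_bit, lxor_bit, land_bit, land_bit, land_bit, lor_bit, lor_bit]
  simp only [bit_val]
  cases a <;> cases b <;> cases c <;> simp <;> linarith

lemma xor_xor_add_two_mul_maj_of_mem_Ico {n : ℕ} {x y z : ℤ}
    (hx : x ∈ Set.Ico (-2 ^ n) (2 ^ n)) (hy : y ∈ Set.Ico (-2 ^ n) (2 ^ n))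
    (hz : z ∈ Set.Ico (-2 ^ n) (2 ^ n)) :
    (x ^^^ y ^^^ z) + 2 * maj x y z = x + y + z := by
  induction n generalizing x y z with
  | zero =>
    have hIco : Set.Ico (-2 ^ 0 : ℤ) (2 ^ 0) = {-1, 0} := by ext; simp; omega
    simp only [hIco, Set.mem_insert_iff, Set.mem_singleton_iff] at hx hy hz
    -- `decide` alone gets stuck on the well-founded recursion of `Nat.bitwise`; the kernel does not.
    rcases hx with rfl | rfl <;> rcases hy with rfl | rfl <;> rcases hz with rfl | rfl <;>
      decide +kernel
  | succ n ih =>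
    have div2_mem {w : ℤ} (hw : w ∈ Set.Ico (-2 ^ (n + 1)) (2 ^ (n + 1))) :
        div2 w ∈ Set.Ico (-2 ^ n) (2 ^ n) := by
      rw [pow_succ] at hw
      simp only [div2_val, Set.mem_Ico] at hw ⊢
      omega
    rw [← bit_decomp x, ← bit_decomp y, ← bit_decomp z]
    exact xor_xor_add_two_mul_maj_bit (ih (div2_mem hx) (div2_mem hy) (div2_mem hz)) _ _ _

lemma mem_Ico_neg_two_pow_two_pow {x : ℤ} {n : ℕ} (h : x.natAbs ≤ n) :
    x ∈ Set.Ico (-2 ^ n) (2 ^ n) := by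
  have hlt : x.natAbs < 2 ^ n := h.trans_lt n.lt_two_pow_self
  have hcast : ((2 ^ n : ℕ) : ℤ) = 2 ^ n := by norm_cast
  simp only [Set.mem_Ico]
  omega

theorem xor_xor_add_two_mul_maj (x y z : ℤ) : (x ^^^ y ^^^ z) + 2 * maj x y z = x + y + z :=
  xor_xor_add_two_mul_maj_of_mem_Ico (n := x.natAbs + y.natAbs + z.natAbs)
    (mem_Ico_neg_two_pow_two_pow (by omega)) (mem_Ico_neg_two_pow_two_pow (by omega))
    (mem_Ico_neg_two_pow_two_pow (by omega))

end Int

/-- Weighted Add-3: 2^k·(x ⊕ y ⊕ z) + 2^(k+1)·maj(x,y,z) = 2^k·(x + y + z). -/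
theorem weighted_add3 (x y z : ℤ) (k : ℕ) :
    2 ^ k * ((x ^^^ y) ^^^ z)
      + 2 ^ (k + 1) * (((x &&& y) ||| (x &&& z)) ||| (y &&& z))
      = 2 ^ k * (x + y + z) := by
  have h := Int.xor_xor_add_two_mul_maj x y z
  unfold Int.maj at h
  rw [pow_succ]
  linear_combination 2 ^ k * h
end

section
/- Let n be a natural number and let L be a list of integers. If x, y, z are integers, then the sum of the list whose elements are ((x XOR y XOR z) mod 2^n), ((2 · ((x AND y) OR (x AND z) OR (y AND z))) mod 2^n), followed by the elements of L, is congruent modulo 2^n to the sum of the list whose elements are x, y, z followed by the elements of L. -/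
namespace Int

theorem eq_zero_of_forall_two_pow_dvd {d : ℤ} (h : ∀ k : ℕ, (2 : ℤ) ^ k ∣ d) : d = 0 :=
  eq_zero_of_dvd_of_natAbs_lt_natAbs (h d.natAbs) <| by
    rw [natAbs_pow]
    exact Nat.lt_two_pow_self

theorem xor_bit (a b : Bool) (x y : ℤ) : bit a x ^^^ bit b y = bit (a ^^ b) (x ^^^ y) :=
  lxor_bit a x b y

theorem maj_bit (a b c : Bool) (x y z : ℤ) :
    maj (bit a x) (bit b y) (bit c z) = bit (a && b || a && c || b && c) (maj x y z) := by
  simp only [maj, HAnd.hAnd, AndOp.and, HOr.hOr, OrOp.or, land_bit, lor_bit]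

def fullAdderDefect (x y z : ℤ) : ℤ := x + y + z - ((x ^^^ y ^^^ z) + 2 * maj x y z)

theorem fullAdderDefect_bit (a b c : Bool) (x y z : ℤ) :
    fullAdderDefect (bit a x) (bit b y) (bit c z) = 2 * fullAdderDefect x y z := by
  rw [fullAdderDefect, fullAdderDefect, maj_bit, xor_bit, xor_bit, bit_val, bit_val, bit_val,
    bit_val, bit_val]
  cases a <;> cases b <;> cases c <;>
    simp only [Bool.and_false, Bool.and_true, Bool.or_false, Bool.or_true, Bool.false_xor,
      Bool.true_xor, Bool.not_false, Bool.not_true, cond_false, cond_true] <;> ring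

theorem two_pow_dvd_fullAdderDefect (k : ℕ) (x y z : ℤ) : 2 ^ k ∣ fullAdderDefect x y z := by
  induction k generalizing x y z with
  | zero => exact one_dvd _
  | succ k ih =>
    rw [← bit_decomp x, ← bit_decomp y, ← bit_decomp z, fullAdderDefect_bit, pow_succ']
    exact mul_dvd_mul_left 2 (ih _ _ _)

end Int

/-- A compression-tree reduction step replacing x, y, z in a list by the truncated
    sum and shifted-carry vectors preserves the list sum modulo 2^n. -/
theorem compress_step_list (n : ℕ) (L : List ℤ) (x y z : ℤ) :
    ((((x ^^^ y) ^^^ z) % 2 ^ n)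
        :: ((2 * (((x &&& y) ||| (x &&& z)) ||| (y &&& z))) % 2 ^ n)
        :: L).sum
      ≡ (x :: y :: z :: L).sum [ZMOD (2 ^ n)] := by
  simp only [List.sum_cons]
  calc (x ^^^ y ^^^ z) % 2 ^ n + (2 * Int.maj x y z % 2 ^ n + L.sum)
      ≡ (x ^^^ y ^^^ z) + (2 * Int.maj x y z + L.sum) [ZMOD 2 ^ n] :=
        (Int.mod_modEq _ _).add ((Int.mod_modEq _ _).add (Int.ModEq.refl _))
    _ = x + y + z + L.sum := by rw [← add_assoc, Int.xor_xor_add_two_mul_maj]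
    _ = x + (y + (z + L.sum)) := by ring
end
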